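/- arXiv:2011.07993 — 2 statements merged into one kernel-verified Lean document; each statement's English description precedes it below -/
import Mathlib

section
/- Let b(ξ) = √(1+|ξ|² − ε²|ξ|⁴) with ε ∈ (0,1]. For ξ, η, σ ∈ ℝ² in the low-frequency region (ε|·|² ≤ 3κ₀, κ₀ ≤ 1/200), each of the phase functions φ̃(ξ,η,σ) = b(ξ) + b(ξ−η) + b(η−σ) + b(σ), b(ξ)+b(ξ−η)+b(η−σ)−b(σ), b(ξ)+b(ξ−η)−b(η−σ)+b(σ), b(ξ)−b(ξ−η)+b(η−σ)+b(σ) is bounded below: |φ̃(ξ,η,σ)| ≥ c·min{⟨ξ⟩, ⟨ξ−η⟩, ⟨η−σ⟩, ⟨σ⟩}^{−1} for a constant c > 0 depending only on κ₀ (equivalently, 1/|φ̃| ≲ min{⟨ξ⟩,⟨ξ−η⟩,⟨η−σ⟩,⟨σ⟩}). -/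
/-!
Write `⟨x⟩ = √(1 + x²)` and `b(x) = √(1 + x² - ε²x⁴)`, so that `0 ≤ ⟨x⟩ - b(x) ≤ ε²x⁴ / ⟨x⟩`
with `ε²x⁴` small on the low-frequency region. A phase with all signs `+` dominates the one
with a `-` in front of `b(σ)`, so it suffices to bound `b(p) + b(q) + b(r) - b(s)` from below
for `s ≤ p + q + r` (the triangle inequality). If `⟨s⟩ ≤ ⟨p⟩`, say, then `b(p) - b(s)` is
almost nonnegative and `b(q) + b(r) ≈ 2`. Otherwise `⟨p⟩`, say, is the smallest bracket;
anchoring at the larger `⟨q⟩`, the bound `⟨s⟩ ≤ ⟨q⟩ + p + r` leaves the phase at least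
`⟨p⟩ - p ≥ 1 / (2⟨p⟩)` up to errors `O(ε²x⁴ / ⟨p⟩)`.
-/

open Real

-- Reducible, so that `linarith` identifies these with the square roots in the theorem.
noncomputable abbrev japaneseBracket (x : ℝ) : ℝ := √(1 + x ^ 2)

noncomputable abbrev dispersion (ε x : ℝ) : ℝ := √(1 + x ^ 2 - ε ^ 2 * x ^ 4)

section

variable {x y : ℝ}

lemma japaneseBracket_sq (x : ℝ) : japaneseBracket x ^ 2 = 1 + x ^ 2 :=
  sq_sqrt (by positivity)

lemma one_le_japaneseBracket (x : ℝ) : 1 ≤ japaneseBracket x :=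
  one_le_sqrt.2 (by nlinarith [sq_nonneg x])

lemma le_japaneseBracket (x : ℝ) : x ≤ japaneseBracket x :=
  (le_abs_self x).trans (abs_le_sqrt (by linarith))

lemma japaneseBracket_le_japaneseBracket (hx : 0 ≤ x) (hxy : x ≤ y) :
    japaneseBracket x ≤ japaneseBracket y := by
  unfold japaneseBracket; gcongr

lemma japaneseBracket_add_le (x : ℝ) (hy : 0 ≤ y) :
    japaneseBracket (x + y) ≤ japaneseBracket x + y := by
  have := le_japaneseBracket x
  refine (sqrt_le_left (by linarith [one_le_japaneseBracket x])).2 ?_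
  nlinarith [japaneseBracket_sq x]

lemma one_half_le_japaneseBracket_mul_sub (x : ℝ) :
    1 / 2 ≤ japaneseBracket x * (japaneseBracket x - x) := by
  nlinarith [japaneseBracket_sq x, sq_nonneg (japaneseBracket x - x)]

lemma dispersion_le_japaneseBracket (ε x : ℝ) : dispersion ε x ≤ japaneseBracket x :=
  sqrt_le_sqrt (by nlinarith [sq_nonneg (ε * x ^ 2)])

lemma japaneseBracket_mul_sub_dispersion_le (ε x : ℝ) :
    japaneseBracket x * (japaneseBracket x - dispersion ε x) ≤ ε ^ 2 * x ^ 4 := by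
  have hB := dispersion_le_japaneseBracket ε x
  have hB0 : 0 ≤ dispersion ε x := sqrt_nonneg _
  have hB2 : 1 + x ^ 2 - ε ^ 2 * x ^ 4 ≤ dispersion ε x ^ 2 :=
    (sq_sqrt' (x := 1 + x ^ 2 - ε ^ 2 * x ^ 4)).symm ▸ le_max_left _ _
  nlinarith [japaneseBracket_sq x]

lemma japaneseBracket_sub_dispersion_le (ε x : ℝ) :
    japaneseBracket x - dispersion ε x ≤ ε ^ 2 * x ^ 4 := by
  nlinarith [japaneseBracket_mul_sub_dispersion_le ε x, one_le_japaneseBracket x,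
    dispersion_le_japaneseBracket ε x]

end

lemma min_choice₄ {α : Type*} [LinearOrder α] (a b c d : α) :
    min a (min b (min c d)) = a ∨ min a (min b (min c d)) = b ∨
      min a (min b (min c d)) = c ∨ min a (min b (min c d)) = d := by
  rcases min_choice a (min b (min c d)) with h | h <;> rw [h]
  · exact Or.inl rfl
  rcases min_choice b (min c d) with h | h <;> rw [h]
  · exact Or.inr (Or.inl rfl)
  · exact Or.inr (Or.inr (min_choice c d))

section

variable {ε p q r s : ℝ}

lemma two_sub_le_phase (hsp : japaneseBracket s ≤ japaneseBracket p) :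
    2 - (ε ^ 2 * p ^ 4 + ε ^ 2 * q ^ 4 + ε ^ 2 * r ^ 4) ≤
      dispersion ε p + dispersion ε q + dispersion ε r - dispersion ε s := by
  linarith [dispersion_le_japaneseBracket ε s, japaneseBracket_sub_dispersion_le ε p,
    japaneseBracket_sub_dispersion_le ε q, japaneseBracket_sub_dispersion_le ε r,
    one_le_japaneseBracket q, one_le_japaneseBracket r]

lemma half_sub_le_japaneseBracket_mul_phase (hp : 0 ≤ p) (hr : 0 ≤ r) (hs : 0 ≤ s)
    (hspqr : s ≤ p + q + r) (hpq : japaneseBracket p ≤ japaneseBracket q)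
    (hpr : japaneseBracket p ≤ japaneseBracket r) :
    1 / 2 - (ε ^ 2 * p ^ 4 + ε ^ 2 * q ^ 4 + ε ^ 2 * r ^ 4) ≤
      japaneseBracket p *
        (dispersion ε p + dispersion ε q + dispersion ε r - dispersion ε s) := by
  have hJs : japaneseBracket s ≤ japaneseBracket q + (p + r) :=
    (japaneseBracket_le_japaneseBracket hs (by linarith)).trans
      (japaneseBracket_add_le q (by positivity))
  have hq_err : japaneseBracket p * (dispersion ε q - japaneseBracket q) ≥ -(ε ^ 2 * q ^ 4) := by
    nlinarith [japaneseBracket_mul_sub_dispersion_le ε q, dispersion_le_japaneseBracket ε q]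
  have hr_err : japaneseBracket p * (dispersion ε r - r) ≥ -(ε ^ 2 * r ^ 4) := by
    nlinarith [japaneseBracket_mul_sub_dispersion_le ε r, dispersion_le_japaneseBracket ε r,
      le_japaneseBracket r, one_le_japaneseBracket p]
  nlinarith [japaneseBracket_mul_sub_dispersion_le ε p, one_half_le_japaneseBracket_mul_sub p,
    dispersion_le_japaneseBracket ε s, one_le_japaneseBracket p]

lemma one_fourth_mul_inv_min_le_phase (hp : 0 ≤ p) (hq : 0 ≤ q) (hr : 0 ≤ r) (hs : 0 ≤ s)
    (hspqr : s ≤ p + q + r) (hsmall : ε ^ 2 * p ^ 4 + ε ^ 2 * q ^ 4 + ε ^ 2 * r ^ 4 ≤ 1 / 4) :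
    1 / 4 * (min (japaneseBracket p) (min (japaneseBracket q)
        (min (japaneseBracket r) (japaneseBracket s))))⁻¹ ≤
      dispersion ε p + dispersion ε q + dispersion ε r - dispersion ε s := by
  set m := min (japaneseBracket p) (min (japaneseBracket q)
    (min (japaneseBracket r) (japaneseBracket s))) with hm
  have hmp : m ≤ japaneseBracket p := min_le_left _ _
  have hmq : m ≤ japaneseBracket q := (min_le_right _ _).trans (min_le_left _ _)
  have hmr : m ≤ japaneseBracket r :=
    (min_le_right _ _).trans ((min_le_right _ _).trans (min_le_left _ _))
  have hms : m ≤ japaneseBracket s :=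
    (min_le_right _ _).trans ((min_le_right _ _).trans (min_le_right _ _))
  have hm1 : 1 ≤ m := le_min (one_le_japaneseBracket p) (le_min (one_le_japaneseBracket q)
    (le_min (one_le_japaneseBracket r) (one_le_japaneseBracket s)))
  rw [← div_eq_mul_inv, div_le_iff₀ (by linarith)]
  rcases min_choice₄ (japaneseBracket p) (japaneseBracket q)
    (japaneseBracket r) (japaneseBracket s) with h | h | h | h <;> rw [← hm] at h <;> rw [h]
  · linarith [half_sub_le_japaneseBracket_mul_phase (ε := ε) hp hr hs hspqr
      (h ▸ hmq) (h ▸ hmr)]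
  · linarith [half_sub_le_japaneseBracket_mul_phase (ε := ε) hq hr hs (by linarith)
      (h ▸ hmp) (h ▸ hmr)]
  · linarith [half_sub_le_japaneseBracket_mul_phase (ε := ε) hr hp hs (by linarith)
      (h ▸ hmq) (h ▸ hmp)]
  · have hphase := two_sub_le_phase (ε := ε) (q := q) (r := r) (h ▸ hmp)
    nlinarith [one_le_japaneseBracket s]

end

lemma norm_le_add_add_of_eq_add_add {E : Type*} [SeminormedAddCommGroup E] {a b c d : E}
    (h : a = b + c + d) : ‖d‖ ≤ ‖a‖ + ‖b‖ + ‖c‖ := by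
  rw [show d = a - b - c by rw [h]; abel]
  exact (norm_sub_le _ _).trans (by gcongr; exact norm_sub_le _ _)

theorem cubic_phase_lower_bound_general
    (κ₀ : ℝ) (hκ' : κ₀ ≤ 1 / 200) :
    ∃ c : ℝ, 0 < c ∧
      ∀ (ε : ℝ), 0 < ε → ε ≤ 1 →
      ∀ (ξ η σ : EuclideanSpace ℝ (Fin 2)),
        ε * ‖ξ‖ ^ 2 ≤ 3 * κ₀ → ε * ‖ξ - η‖ ^ 2 ≤ 3 * κ₀ →
        ε * ‖η - σ‖ ^ 2 ≤ 3 * κ₀ → ε * ‖σ‖ ^ 2 ≤ 3 * κ₀ →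
      ∀ (s₁ s₂ s₃ : ℝ),
        ((s₁, s₂, s₃) = (1, 1, 1) ∨ (s₁, s₂, s₃) = (1, 1, -1) ∨
         (s₁, s₂, s₃) = (1, -1, 1) ∨ (s₁, s₂, s₃) = (-1, 1, 1)) →
        c * (min (Real.sqrt (1 + ‖ξ‖ ^ 2))
              (min (Real.sqrt (1 + ‖ξ - η‖ ^ 2))
                (min (Real.sqrt (1 + ‖η - σ‖ ^ 2)) (Real.sqrt (1 + ‖σ‖ ^ 2)))))⁻¹
        ≤ |Real.sqrt (1 + ‖ξ‖ ^ 2 - ε ^ 2 * ‖ξ‖ ^ 4)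
            + s₁ * Real.sqrt (1 + ‖ξ - η‖ ^ 2 - ε ^ 2 * ‖ξ - η‖ ^ 4)
            + s₂ * Real.sqrt (1 + ‖η - σ‖ ^ 2 - ε ^ 2 * ‖η - σ‖ ^ 4)
            + s₃ * Real.sqrt (1 + ‖σ‖ ^ 2 - ε ^ 2 * ‖σ‖ ^ 4)| := by
  refine ⟨1 / 4, by norm_num, fun ε hε _ ξ η σ h₁ h₂ h₃ h₄ s₁ s₂ s₃ hsigns => ?_⟩
  have hsmall : ∀ x : EuclideanSpace ℝ (Fin 2), ε * ‖x‖ ^ 2 ≤ 3 * κ₀ →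
      ε ^ 2 * ‖x‖ ^ 4 ≤ 1 / 12 := fun x hx => by
    have : 0 ≤ ε * ‖x‖ ^ 2 := by positivity
    nlinarith
  have hsum : ξ = (ξ - η) + (η - σ) + σ := by abel
  have key := fun {q r s : EuclideanSpace ℝ (Fin 2)} (hs : ξ = q + r + s)
      (hq : ε * ‖q‖ ^ 2 ≤ 3 * κ₀) (hr : ε * ‖r‖ ^ 2 ≤ 3 * κ₀) =>
    one_fourth_mul_inv_min_le_phase (ε := ε) (norm_nonneg ξ) (norm_nonneg q) (norm_nonneg r)
      (norm_nonneg s) (norm_le_add_add_of_eq_add_add hs)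
      (by linarith [hsmall ξ h₁, hsmall q hq, hsmall r hr])
  rcases hsigns with h | h | h | h <;> simp only [Prod.mk.injEq] at h <;>
    obtain ⟨rfl, rfl, rfl⟩ := h <;> refine le_trans ?_ (le_abs_self _)
  · linarith [key hsum h₂ h₃, sqrt_nonneg (1 + ‖σ‖ ^ 2 - ε ^ 2 * ‖σ‖ ^ 4)]
  · linarith [key hsum h₂ h₃]
  · rw [min_comm (√(1 + ‖η - σ‖ ^ 2))]
    linarith [key (by abel : ξ = (ξ - η) + σ + (η - σ)) h₂ h₄]
  · rw [min_comm (√(1 + ‖ξ - η‖ ^ 2)), min_assoc]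
    linarith [key (by abel : ξ = (η - σ) + σ + (ξ - η)) h₃ h₄]

/-- With `b(ξ)=√(1+|ξ|²−ε²|ξ|⁴)`, `ε ∈ (0,1]`, on the
low-frequency region `ε|·|² ≤ 3κ₀` (`κ₀ ≤ 1/200`), each of the phases
`b(ξ) ± b(ξ−η) ± b(η−σ) ± b(σ)` with at most one minus sign (including the
all-plus phase) satisfies
`|φ̃| ≥ c · (min{⟨ξ⟩,⟨ξ−η⟩,⟨η−σ⟩,⟨σ⟩})⁻¹` with `c = c(κ₀) > 0`. -/
theorem cubic_phase_lower_bound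
    (κ₀ : ℝ) (hκ : 0 < κ₀) (hκ' : κ₀ ≤ 1 / 200) :
    ∃ c : ℝ, 0 < c ∧
      ∀ (ε : ℝ), 0 < ε → ε ≤ 1 →
      ∀ (ξ η σ : EuclideanSpace ℝ (Fin 2)),
        ε * ‖ξ‖ ^ 2 ≤ 3 * κ₀ → ε * ‖ξ - η‖ ^ 2 ≤ 3 * κ₀ →
        ε * ‖η - σ‖ ^ 2 ≤ 3 * κ₀ → ε * ‖σ‖ ^ 2 ≤ 3 * κ₀ →
      ∀ (s₁ s₂ s₃ : ℝ),
        ((s₁, s₂, s₃) = (1, 1, 1) ∨ (s₁, s₂, s₃) = (1, 1, -1) ∨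
         (s₁, s₂, s₃) = (1, -1, 1) ∨ (s₁, s₂, s₃) = (-1, 1, 1)) →
        c * (min (Real.sqrt (1 + ‖ξ‖ ^ 2))
              (min (Real.sqrt (1 + ‖ξ - η‖ ^ 2))
                (min (Real.sqrt (1 + ‖η - σ‖ ^ 2)) (Real.sqrt (1 + ‖σ‖ ^ 2)))))⁻¹
        ≤ |Real.sqrt (1 + ‖ξ‖ ^ 2 - ε ^ 2 * ‖ξ‖ ^ 4)
            + s₁ * Real.sqrt (1 + ‖ξ - η‖ ^ 2 - ε ^ 2 * ‖ξ - η‖ ^ 4)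
            + s₂ * Real.sqrt (1 + ‖η - σ‖ ^ 2 - ε ^ 2 * ‖η - σ‖ ^ 4)
            + s₃ * Real.sqrt (1 + ‖σ‖ ^ 2 - ε ^ 2 * ‖σ‖ ^ 4)| :=
  cubic_phase_lower_bound_general κ₀ hκ'
end

section
/- Bootstrap/Grönwall step: suppose E : [0,T] → [0,∞) is C¹ and satisfies E'(t) ≤ C₂ E(t)^{3/2} + ϑ³(1+t)^{−1}ε² + ϑ(1+t)^{−1}E(t) for all t ∈ [0,T], with E(0) ≤ ϑ²ε², where ε ∈ (0,1], 0 < ϑ ≤ 1/2, 16 C₂^{3/2} ϑ ≤ 1, and T ≤ ε^{−(1−ϑ)}. If additionally sup_{0≤t≤T} E(t) ≤ 4ϑ²ε^{2−ϑ}, then in fact sup_{0≤t≤T} E(t) ≤ (7/2)ϑ²ε^{2−ϑ}. -/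
open Real Set

/-! The bootstrap bound `E ≤ 4ϑ²ε^{2-ϑ} = b²`, `b = 2ϑε^{1-ϑ/2}`, linearises the superlinear
term: `C₂ E^{3/2} ≤ C₂ b E`. Hence `f = E + ϑ²ε²` satisfies `f' ≤ (C₂ b + ϑ/(1+t)) f`, and the
integrating factor `e^{-C₂ b t} (1+t)^{-ϑ}` gives `E(t) + ϑ²ε² ≤ 2ϑ²ε² e^{C₂ b t} (1+t)^ϑ`.
For `t ≤ ε^{-(1-ϑ)}` the smallness condition gives `C₂ b t ≤ 2 C₂ ϑ ≤ 1/4`, while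
`(1+t)^ϑ ≤ 2^ϑ (ε^{-ϑ})^{1-ϑ}` is bounded by Bernoulli's inequality in both factors; the resulting
constant is below `7/2`. -/

theorem le_mul_exp_sub_of_hasDerivAt_le_mul {f f' g G : ℝ → ℝ} {a b : ℝ}
    (hf : ∀ t ∈ Icc a b, HasDerivAt f (f' t) t) (hG : ∀ t ∈ Icc a b, HasDerivAt G (g t) t)
    (hle : ∀ t ∈ Icc a b, f' t ≤ g t * f t) :
    ∀ t ∈ Icc a b, f t ≤ f a * exp (G t - G a) := by
  have hH : ∀ t ∈ Icc a b,
      HasDerivAt (fun s ↦ f s * exp (-G s)) ((f' t - g t * f t) * exp (-G t)) t := by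
    intro t ht
    exact ((hf t ht).mul (hG t ht).neg.exp).congr_deriv (by rw [Pi.neg_apply]; ring)
  have hanti : AntitoneOn (fun s ↦ f s * exp (-G s)) (Icc a b) := by
    refine antitoneOn_of_deriv_nonpos (convex_Icc a b)
      (fun t ht ↦ (hH t ht).continuousAt.continuousWithinAt) ?_ ?_ <;> rw [interior_Icc]
    · exact fun t ht ↦ (hH t (Ioo_subset_Icc_self ht)).differentiableAt.differentiableWithinAt
    · intro t ht
      rw [(hH t (Ioo_subset_Icc_self ht)).deriv]
      exact mul_nonpos_of_nonpos_of_nonneg (sub_nonpos.2 (hle t (Ioo_subset_Icc_self ht)))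
        (exp_pos _).le
  intro t ht
  calc f t = f t * exp (-G t) * exp (G t) := by rw [mul_assoc, ← exp_add]; simp
    _ ≤ f a * exp (-G a) * exp (G t) := by
        gcongr ?_ * _
        exact hanti (left_mem_Icc.2 (ht.1.trans ht.2)) ht ht.1
    _ = f a * exp (G t - G a) := by rw [sub_eq_add_neg, exp_add]; ring

theorem add_le_mul_exp_mul_one_add_rpow_of_hasDerivAt_le {E E' : ℝ → ℝ} {c k A T : ℝ}
    (hE : ∀ t ∈ Icc 0 T, HasDerivAt E (E' t) t)
    (hle : ∀ t ∈ Icc 0 T, E' t ≤ (c + k * (1 + t)⁻¹) * (E t + A)) :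
    ∀ t ∈ Icc 0 T, E t + A ≤ (E 0 + A) * (exp (c * t) * (1 + t) ^ k) := by
  have hG : ∀ t ∈ Icc 0 T,
      HasDerivAt (fun s ↦ c * s + k * log (1 + s)) (c + k * (1 + t)⁻¹) t := by
    intro t ht
    have hlog : HasDerivAt (fun s ↦ log (1 + s)) (1 + t)⁻¹ t := by
      simpa using ((hasDerivAt_id' t).const_add 1).log (by linarith [ht.1])
    exact ((hasDerivAt_id' t).const_mul c).add (hlog.const_mul k) |>.congr_deriv (by ring)
  intro t ht
  have h := le_mul_exp_sub_of_hasDerivAt_le_mul (fun s hs ↦ (hE s hs).add_const A) hG hle t ht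
  have h1 : (0 : ℝ) < 1 + t := by linarith [ht.1]
  simpa [exp_add, rpow_def_of_pos h1, mul_comm k] using h

theorem rpow_three_halves_le_mul_of_le_sq {x b : ℝ} (hx : 0 ≤ x) (hb : 0 ≤ b)
    (hxb : x ≤ b ^ 2) : x ^ ((3 : ℝ) / 2) ≤ b * x := by
  rw [show (3 : ℝ) / 2 = 1 + 1 / 2 by norm_num, rpow_add' hx (by norm_num), rpow_one,
    ← sqrt_eq_rpow, mul_comm]
  gcongr
  exact sqrt_le_iff.2 ⟨hb, hxb⟩

theorem mul_le_one_eighth_of_rpow_mul_le {C ϑ : ℝ} (hC : 0 ≤ C) (hϑ : 0 ≤ ϑ)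
    (hϑ' : ϑ ≤ 1 / 2) (h : 16 * C ^ ((3 : ℝ) / 2) * ϑ ≤ 1) : C * ϑ ≤ 1 / 8 := by
  have hcube : (C * ϑ) ^ 3 = (C ^ ((3 : ℝ) / 2) * ϑ) ^ 2 * ϑ := by
    rw [mul_pow (C ^ _), ← rpow_natCast (C ^ _), ← rpow_mul hC]
    norm_num
    ring
  refine le_of_pow_le_pow_left₀ three_ne_zero (by norm_num) ?_
  calc (C * ϑ) ^ 3 = (C ^ ((3 : ℝ) / 2) * ϑ) ^ 2 * ϑ := hcube
    _ ≤ (1 / 16) ^ 2 * (1 / 2) := by gcongr; linarith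
    _ = (1 / 8) ^ 3 := by norm_num

theorem one_add_rpow_le_of_le_rpow_neg {ε ϑ t : ℝ} (hε : 0 < ε) (hε1 : ε ≤ 1)
    (hϑ : 0 ≤ ϑ) (hϑ1 : ϑ ≤ 1) (ht : 0 ≤ t) (htε : t ≤ ε ^ (-(1 - ϑ))) :
    (1 + t) ^ ϑ ≤ (1 + ϑ) * (1 + (1 - ϑ) * (ε ^ (-ϑ) - 1)) := by
  have hu : 1 ≤ ε ^ (-ϑ) := one_le_rpow_of_pos_of_le_one_of_nonpos hε hε1 (by linarith)
  have hv : 1 ≤ ε ^ (-(1 - ϑ)) := one_le_rpow_of_pos_of_le_one_of_nonpos hε hε1 (by linarith)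
  calc (1 + t) ^ ϑ ≤ (1 + 1) ^ ϑ * (ε ^ (-(1 - ϑ))) ^ ϑ := by
        rw [← mul_rpow (by norm_num) (by linarith)]
        gcongr
        linarith
    _ = (1 + 1) ^ ϑ * (1 + (ε ^ (-ϑ) - 1)) ^ (1 - ϑ) := by
        rw [← rpow_mul hε.le, add_sub_cancel, ← rpow_mul hε.le]
        ring_nf
    _ ≤ (1 + ϑ * 1) * (1 + (1 - ϑ) * (ε ^ (-ϑ) - 1)) := by
        gcongr
        · exact rpow_one_add_le_one_add_mul_self (by norm_num) hϑ hϑ1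
        · exact rpow_one_add_le_one_add_mul_self (by linarith) (by linarith) (by linarith)
    _ = (1 + ϑ) * (1 + (1 - ϑ) * (ε ^ (-ϑ) - 1)) := by ring

theorem two_mul_exp_mul_one_add_rpow_sub_one_le {C ε ϑ t : ℝ} (hC : 0 ≤ C) (hε : 0 < ε)
    (hε1 : ε ≤ 1) (hϑ : 0 ≤ ϑ) (hϑ1 : ϑ ≤ 1 / 2) (hsmall : 16 * C ^ ((3 : ℝ) / 2) * ϑ ≤ 1)
    (ht : 0 ≤ t) (htε : t ≤ ε ^ (-(1 - ϑ))) :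
    2 * (exp (C * (2 * ϑ * ε ^ (1 - ϑ / 2)) * t) * (1 + t) ^ ϑ) - 1 ≤ 7 / 2 * ε ^ (-ϑ) := by
  have hrate : C * (2 * ϑ * ε ^ (1 - ϑ / 2)) * t ≤ 1 / 4 :=
    calc C * (2 * ϑ * ε ^ (1 - ϑ / 2)) * t
        ≤ C * (2 * ϑ * ε ^ (1 - ϑ / 2)) * ε ^ (-(1 - ϑ)) := by gcongr
      _ = 2 * (C * ϑ) * ε ^ (ϑ / 2) := by
          have hεpow : ε ^ (1 - ϑ / 2) * ε ^ (-(1 - ϑ)) = ε ^ (ϑ / 2) := by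
            rw [← rpow_add hε]; ring_nf
          linear_combination (2 * C * ϑ) * hεpow
      _ ≤ 2 * (1 / 8) * 1 := by
          gcongr
          · exact mul_le_one_eighth_of_rpow_mul_le hC hϑ hϑ1 hsmall
          · exact rpow_le_one hε.le hε1 (by positivity)
      _ = 1 / 4 := by norm_num
  have hexp : exp (C * (2 * ϑ * ε ^ (1 - ϑ / 2)) * t) ≤ 4 / 3 :=
    (exp_bound_div_one_sub_of_interval (by positivity) (by linarith)).trans
      (by rw [div_le_div_iff₀ (by linarith) (by norm_num)]; linarith)
  have hpow := one_add_rpow_le_of_le_rpow_neg hε hε1 hϑ (by linarith) ht htε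
  have hu : 1 ≤ ε ^ (-ϑ) := one_le_rpow_of_pos_of_le_one_of_nonpos hε hε1 (by linarith)
  have hX : 0 ≤ (1 + t) ^ ϑ := rpow_nonneg (by linarith) ϑ
  calc 2 * (exp (C * (2 * ϑ * ε ^ (1 - ϑ / 2)) * t) * (1 + t) ^ ϑ) - 1
      ≤ 2 * (4 / 3 * ((1 + ϑ) * (1 + (1 - ϑ) * (ε ^ (-ϑ) - 1)))) - 1 := by gcongr
    _ ≤ 7 / 2 * ε ^ (-ϑ) := by nlinarith [mul_nonneg (mul_nonneg hϑ hϑ) (sub_nonneg.2 hu)]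

theorem bootstrap_gronwall_step_general
    (C₂ ε ϑ T : ℝ) (E E' : ℝ → ℝ)
    (hC₂ : 0 < C₂) (hε : 0 < ε ∧ ε ≤ 1) (hϑ : 0 < ϑ ∧ ϑ ≤ 1 / 2)
    (hsmall : 16 * C₂ ^ ((3 : ℝ) / 2) * ϑ ≤ 1)
    (hT' : T ≤ ε ^ (-(1 - ϑ)))
    (hEpos : ∀ t ∈ Icc (0 : ℝ) T, 0 ≤ E t)
    (hderiv : ∀ t ∈ Icc (0 : ℝ) T, HasDerivAt E (E' t) t)
    (hineq : ∀ t ∈ Icc (0 : ℝ) T,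
      E' t ≤ C₂ * E t ^ ((3 : ℝ) / 2) + ϑ ^ 3 * (1 + t)⁻¹ * ε ^ 2 + ϑ * (1 + t)⁻¹ * E t)
    (hE0 : E 0 ≤ ϑ ^ 2 * ε ^ 2)
    (hboot : ∀ t ∈ Icc (0 : ℝ) T, E t ≤ 4 * ϑ ^ 2 * ε ^ (2 - ϑ)) :
    ∀ t ∈ Icc (0 : ℝ) T, E t ≤ (7 / 2) * ϑ ^ 2 * ε ^ (2 - ϑ) := by
  obtain ⟨hε0, hε1⟩ := hε
  obtain ⟨hϑ0, hϑ1⟩ := hϑ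
  set b := 2 * ϑ * ε ^ (1 - ϑ / 2) with hb_def
  set A := ϑ ^ 2 * ε ^ 2 with hA_def
  have hboot_sq : 4 * ϑ ^ 2 * ε ^ (2 - ϑ) = b ^ 2 := by
    rw [hb_def, mul_pow, mul_pow, ← rpow_natCast (ε ^ _), ← rpow_mul hε0.le]
    ring_nf
  have hlin : ∀ t ∈ Icc (0 : ℝ) T, E' t ≤ (C₂ * b + ϑ * (1 + t)⁻¹) * (E t + A) := by
    intro t ht
    have habsorb :=
      rpow_three_halves_le_mul_of_le_sq (hEpos t ht) (by positivity) (hboot_sq ▸ hboot t ht)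
    have : 0 ≤ C₂ * b * A := by positivity
    nlinarith [hineq t ht, mul_le_mul_of_nonneg_left habsorb hC₂.le]
  intro t ht
  have hgron := add_le_mul_exp_mul_one_add_rpow_of_hasDerivAt_le hderiv hlin t ht
  have hfactor := two_mul_exp_mul_one_add_rpow_sub_one_le hC₂.le hε0 hε1 hϑ0.le hϑ1 hsmall ht.1
    (ht.2.trans hT')
  have hA : 0 ≤ A := by positivity
  have hX : 0 ≤ exp (C₂ * b * t) * (1 + t) ^ ϑ :=
    mul_nonneg (exp_pos _).le (rpow_nonneg (by linarith [ht.1]) ϑ)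
  calc E t ≤ A * (2 * (exp (C₂ * b * t) * (1 + t) ^ ϑ) - 1) := by
        nlinarith [mul_le_mul_of_nonneg_right hE0 hX]
    _ ≤ A * (7 / 2 * ε ^ (-ϑ)) := mul_le_mul_of_nonneg_left hfactor hA
    _ = 7 / 2 * ϑ ^ 2 * ε ^ (2 - ϑ) := by
        rw [hA_def, sub_eq_add_neg, rpow_add hε0, rpow_two]; ring

/-- Bootstrap/Grönwall step.  If `E : [0,T] → [0,∞)` is
differentiable with
`E' ≤ C₂ E^{3/2} + ϑ³(1+t)⁻¹ε² + ϑ(1+t)⁻¹E` on `[0,T]`, `E(0) ≤ ϑ²ε²`,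
`ε ∈ (0,1]`, `0 < ϑ ≤ 1/2`, `16C₂^{3/2}ϑ ≤ 1`, `T ≤ ε^{−(1−ϑ)}`, and
`E ≤ 4ϑ²ε^{2−ϑ}` on `[0,T]`, then `E ≤ (7/2)ϑ²ε^{2−ϑ}` on `[0,T]`. -/
theorem bootstrap_gronwall_step
    (C₂ ε ϑ T : ℝ) (E E' : ℝ → ℝ)
    (hC₂ : 0 < C₂) (hε : 0 < ε ∧ ε ≤ 1) (hϑ : 0 < ϑ ∧ ϑ ≤ 1 / 2)
    (hsmall : 16 * C₂ ^ ((3 : ℝ) / 2) * ϑ ≤ 1)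
    (hT : 0 ≤ T) (hT' : T ≤ ε ^ (-(1 - ϑ)))
    (hEpos : ∀ t ∈ Icc (0 : ℝ) T, 0 ≤ E t)
    (hderiv : ∀ t ∈ Icc (0 : ℝ) T, HasDerivAt E (E' t) t)
    (hineq : ∀ t ∈ Icc (0 : ℝ) T,
      E' t ≤ C₂ * E t ^ ((3 : ℝ) / 2) + ϑ ^ 3 * (1 + t)⁻¹ * ε ^ 2 + ϑ * (1 + t)⁻¹ * E t)
    (hE0 : E 0 ≤ ϑ ^ 2 * ε ^ 2)
    (hboot : ∀ t ∈ Icc (0 : ℝ) T, E t ≤ 4 * ϑ ^ 2 * ε ^ (2 - ϑ)) :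
    ∀ t ∈ Icc (0 : ℝ) T, E t ≤ (7 / 2) * ϑ ^ 2 * ε ^ (2 - ϑ) :=
  bootstrap_gronwall_step_general C₂ ε ϑ T E E' hC₂ hε hϑ hsmall hT' hEpos hderiv hineq hE0 hboot
end
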